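/- arXiv:1708.02520 — 2 statements merged into one kernel-verified Lean document; each statement's English description precedes it below -/
import Mathlib

section
/- Let $N \geq 2$, let $a_1,\dots,a_N$ be real constants with $0 < a_1 < a_2 < \dots < a_N$, and let $x_1,\dots,x_N : J \to \mathbb{R}$ be differentiable functions on an open interval $J$ satisfying the ordered mCH $N$-peakon system. Then the function $E_1(t) = 2\sum_{i=1}^N a_i^2 + 4\sum_{1 \le i < j \le N} a_i a_j e^{-(x_i(t)-x_j(t))}$ satisfies $\dot E_1(t) > 0$ for all $t \in J$; in particular $E_1$ is strictly increasing and is not a conserved quantity of the system. -/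
open Finset

/-!
Write `pᵢ = aᵢ e^{-xᵢ}` and `qᵢ = aᵢ e^{xᵢ}`, so that `pᵢ qᵢ = aᵢ²` and
`aᵢ aⱼ e^{-(xᵢ - xⱼ)} = pᵢ qⱼ`. On an ordered configuration the velocity of the `j`-th peakon is
`(2/3) pⱼ qⱼ + Bⱼ`, where `Bⱼ` (`coupling`) is built from the partial sums `Pⱼ = ∑_{i<j} pᵢ` and
`Qⱼ = ∑_{k>j} q_k`. Hence `Ė₁ = 4 ∑_{i<j} pᵢ qⱼ (ẋⱼ - ẋᵢ)`, and the `B`-part of this sum vanishes: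
it equals `∑ⱼ (Pⱼ qⱼ - pⱼ Qⱼ) Bⱼ`, which telescopes with potential `2 (Pⱼ (qⱼ + Qⱼ))²`.
What remains is `Ė₁ = (8/3) ∑_{i<j} aᵢ aⱼ (aⱼ² - aᵢ²) e^{-(xᵢ - xⱼ)}`, positive for
`0 < a₁ < ⋯ < a_N`.
-/

section Combinatorics

variable {α M : Type*} [LinearOrder α] [AddCommMonoid M]

theorem Finset.sum_sum_filter_lt_comm (s : Finset α) (f : α → α → M) :
    ∑ i ∈ s, ∑ j ∈ s.filter (fun j => i < j), f i j
      = ∑ j ∈ s, ∑ i ∈ s.filter (fun i => i < j), f i j :=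
  Finset.sum_comm' fun i j => by simp only [mem_filter]; tauto

theorem Finset.sum_erase_eq_sum_filter_lt_add_sum_filter_gt [DecidableEq α] (s : Finset α)
    (f : α → M) (i : α) :
    ∑ j ∈ s.erase i, f j = ∑ j ∈ s.filter (fun j => j < i), f j
      + ∑ j ∈ s.filter (fun j => i < j), f j := by
  rw [← sum_filter_add_sum_filter_not (s.erase i) (fun j => j < i)]
  congr 2 <;> ext k <;> simp only [mem_filter, mem_erase] <;> grind

end Combinatorics

theorem Finset.sum_Icc_one_sub_succ {M : Type*} [AddCommGroup M] (H : ℕ → M) (N : ℕ) :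
    ∑ j ∈ Icc 1 N, (H j - H (j + 1)) = H 1 - H (N + 1) := by
  induction N with
  | zero => simp
  | succ n ih => rw [sum_Icc_succ_top (by omega), ih]; abel

theorem Finset.sum_Icc_filter_lt_pos {M : Type*} [AddCommMonoid M] [PartialOrder M]
    [IsOrderedCancelAddMonoid M] {N : ℕ} (hN : 2 ≤ N) {f : ℕ → ℕ → M}
    (hf : ∀ i ∈ Icc 1 N, ∀ j ∈ Icc 1 N, i < j → 0 < f i j) :
    0 < ∑ i ∈ Icc 1 N, ∑ j ∈ (Icc 1 N).filter (fun j => i < j), f i j := by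
  have hf' : ∀ i ∈ Icc 1 N, ∀ j ∈ (Icc 1 N).filter (fun j => i < j), 0 < f i j :=
    fun i hi j hj => hf i hi j (mem_filter.mp hj).1 (mem_filter.mp hj).2
  have h₁ : 1 ∈ Icc 1 N := mem_Icc.mpr ⟨le_rfl, by omega⟩
  have h₂ : 2 ∈ (Icc 1 N).filter (fun j => 1 < j) := by simp [hN]
  exact sum_pos' (fun i hi => sum_nonneg fun j hj => (hf' i hi j hj).le)
    ⟨1, h₁, sum_pos (hf' 1 h₁) ⟨2, h₂⟩⟩

namespace MCHPeakon

section Telescoping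

variable (N : ℕ) (p q : ℕ → ℝ)

noncomputable def sumBelow (j : ℕ) : ℝ := ∑ i ∈ (Icc 1 N).filter (fun i => i < j), p i

noncomputable def sumAbove (j : ℕ) : ℝ := ∑ k ∈ (Icc 1 N).filter (fun k => j < k), q k

noncomputable def coupling (j : ℕ) : ℝ :=
  2 * (q j * sumBelow N p j + p j * sumAbove N q j) + 4 * (sumBelow N p j * sumAbove N q j)

theorem sumBelow_one : sumBelow N p 1 = 0 :=
  sum_eq_zero fun i hi => by simp only [mem_filter, mem_Icc] at hi; omega

theorem sumAbove_of_le {j : ℕ} (hj : N ≤ j) : sumAbove N q j = 0 :=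
  sum_eq_zero fun k hk => by simp only [mem_filter, mem_Icc] at hk; omega

theorem sumBelow_succ {j : ℕ} (hj : j ∈ Icc 1 N) :
    sumBelow N p (j + 1) = sumBelow N p j + p j := by
  have : (Icc 1 N).filter (fun i => i < j + 1) = insert j ((Icc 1 N).filter (fun i => i < j)) := by
    ext k; simp only [mem_filter, mem_insert, mem_Icc] at hj ⊢; omega
  rw [sumBelow, this, sum_insert (by simp), add_comm]; rfl

theorem sumAbove_pred {j : ℕ} (hj : j ∈ Icc 1 N) :
    sumAbove N q (j - 1) = q j + sumAbove N q j := by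
  have : (Icc 1 N).filter (fun k => j - 1 < k) = insert j ((Icc 1 N).filter (fun k => j < k)) := by
    ext k; simp only [mem_filter, mem_insert, mem_Icc] at hj ⊢; omega
  rw [sumAbove, this, sum_insert (by simp)]; rfl

noncomputable def potential (j : ℕ) : ℝ := 2 * (sumBelow N p j * sumAbove N q (j - 1)) ^ 2

theorem sub_mul_coupling_eq {j : ℕ} (hj : j ∈ Icc 1 N) :
    (sumBelow N p j * q j - p j * sumAbove N q j) * coupling N p q j
      = potential N p q j - potential N p q (j + 1) := by
  rw [potential, potential, sumBelow_succ N p hj, sumAbove_pred N q hj, Nat.add_sub_cancel,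
    coupling]
  ring

theorem sum_pairs_mul_coupling_sub_eq_zero :
    ∑ i ∈ Icc 1 N, ∑ j ∈ (Icc 1 N).filter (fun j => i < j),
      p i * q j * (coupling N p q j - coupling N p q i) = 0 := by
  have hsplit : ∀ i ∈ Icc 1 N, ∑ j ∈ (Icc 1 N).filter (fun j => i < j),
      p i * q j * (coupling N p q j - coupling N p q i)
        = ∑ j ∈ (Icc 1 N).filter (fun j => i < j), p i * q j * coupling N p q j
          - p i * sumAbove N q i * coupling N p q i := by
    intro i _
    rw [sumAbove, mul_sum, sum_mul, ← sum_sub_distrib]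
    exact sum_congr rfl fun j _ => by ring
  rw [sum_congr rfl hsplit, sum_sub_distrib, sum_sum_filter_lt_comm]
  simp_rw [← sum_mul]
  rw [← sum_sub_distrib]
  calc ∑ j ∈ Icc 1 N, ((∑ i ∈ (Icc 1 N).filter (fun i => i < j), p i) * q j * coupling N p q j
        - p j * sumAbove N q j * coupling N p q j)
      = ∑ j ∈ Icc 1 N, (potential N p q j - potential N p q (j + 1)) := by
        refine sum_congr rfl fun j hj => ?_
        rw [← sub_mul_coupling_eq N p q hj, sumBelow]
        ring
    _ = 0 := by
        rw [sum_Icc_one_sub_succ, potential, potential, sumBelow_one,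
          Nat.add_sub_cancel, sumAbove_of_le N q le_rfl]
        ring

end Telescoping

section Peakons

variable (N : ℕ) (a : ℕ → ℝ)

noncomputable def velocity (X : ℕ → ℝ) (i : ℕ) : ℝ :=
  (2/3) * a i ^ 2
    + 2 * a i * ∑ j ∈ (Icc 1 N).erase i, a j * Real.exp (-|X i - X j|)
    + 4 * ∑ j ∈ (Icc 1 N).filter (fun j => j < i), ∑ k ∈ (Icc 1 N).filter (fun k => i < k),
        a j * a k * Real.exp (-(X j - X k))

/-- `E₁` at positions `X`. -/
noncomputable def energy (X : ℕ → ℝ) : ℝ :=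
  2 * ∑ i ∈ Icc 1 N, a i ^ 2
    + 4 * ∑ i ∈ Icc 1 N, ∑ j ∈ (Icc 1 N).filter (fun j => i < j),
        a i * a j * Real.exp (-(X i - X j))

theorem mul_exp_neg_sub (X : ℕ → ℝ) (i j : ℕ) :
    a i * a j * Real.exp (-(X i - X j)) = a i * Real.exp (-X i) * (a j * Real.exp (X j)) := by
  rw [neg_sub, sub_eq_add_neg, Real.exp_add]; ring

theorem velocity_eq_add_coupling {X : ℕ → ℝ}
    (hX : ∀ i ∈ Icc 1 N, ∀ j ∈ Icc 1 N, i < j → X j < X i) {i : ℕ} (hi : i ∈ Icc 1 N) :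
    velocity N a X i = (2/3) * a i ^ 2
      + coupling N (fun k => a k * Real.exp (-X k)) (fun k => a k * Real.exp (X k)) i := by
  have hbelow : ∑ j ∈ (Icc 1 N).filter (fun j => j < i), a j * Real.exp (-|X i - X j|)
      = Real.exp (X i) * sumBelow N (fun k => a k * Real.exp (-X k)) i := by
    rw [sumBelow, mul_sum]
    refine sum_congr rfl fun j hj => ?_
    obtain ⟨hj, hji⟩ := mem_filter.mp hj
    rw [abs_of_neg (sub_neg.mpr (hX j hj i hi hji)), neg_neg, sub_eq_add_neg, Real.exp_add]
    ring
  have habove : ∑ j ∈ (Icc 1 N).filter (fun j => i < j), a j * Real.exp (-|X i - X j|)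
      = Real.exp (-X i) * sumAbove N (fun k => a k * Real.exp (X k)) i := by
    rw [sumAbove, mul_sum]
    refine sum_congr rfl fun j hj => ?_
    obtain ⟨hj, hij⟩ := mem_filter.mp hj
    rw [abs_of_pos (sub_pos.mpr (hX i hi j hj hij)), neg_sub', sub_neg_eq_add, Real.exp_add]
    ring
  have hcross : ∑ j ∈ (Icc 1 N).filter (fun j => j < i), ∑ k ∈ (Icc 1 N).filter (fun k => i < k),
        a j * a k * Real.exp (-(X j - X k))
      = sumBelow N (fun k => a k * Real.exp (-X k)) i
        * sumAbove N (fun k => a k * Real.exp (X k)) i := by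
    simp only [sumBelow, sumAbove, sum_mul_sum, mul_exp_neg_sub]
  rw [velocity, sum_erase_eq_sum_filter_lt_add_sum_filter_gt, hbelow, habove, hcross, coupling]
  ring

theorem sum_pairs_mul_velocity_sub {X : ℕ → ℝ}
    (hX : ∀ i ∈ Icc 1 N, ∀ j ∈ Icc 1 N, i < j → X j < X i) :
    4 * ∑ i ∈ Icc 1 N, ∑ j ∈ (Icc 1 N).filter (fun j => i < j),
        a i * a j * Real.exp (-(X i - X j)) * (velocity N a X j - velocity N a X i)
      = (8/3) * ∑ i ∈ Icc 1 N, ∑ j ∈ (Icc 1 N).filter (fun j => i < j),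
        a i * a j * (a j ^ 2 - a i ^ 2) * Real.exp (-(X i - X j)) := by
  set p : ℕ → ℝ := fun k => a k * Real.exp (-X k)
  set q : ℕ → ℝ := fun k => a k * Real.exp (X k)
  have hterm : ∀ i ∈ Icc 1 N, ∀ j ∈ (Icc 1 N).filter (fun j => i < j),
      a i * a j * Real.exp (-(X i - X j)) * (velocity N a X j - velocity N a X i)
        = (2/3) * (a i * a j * (a j ^ 2 - a i ^ 2) * Real.exp (-(X i - X j)))
          + p i * q j * (coupling N p q j - coupling N p q i) := by
    intro i hi j hj
    rw [velocity_eq_add_coupling N a hX hi, velocity_eq_add_coupling N a hX (mem_filter.mp hj).1]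
    simp only [p, q, neg_sub, Real.exp_sub, Real.exp_neg]
    ring
  simp_rw [sum_congr rfl fun i hi => sum_congr rfl (hterm i hi), sum_add_distrib, ← mul_sum,
    sum_pairs_mul_coupling_sub_eq_zero]
  ring

theorem hasDerivAt_energy {x : ℕ → ℝ → ℝ} {v : ℕ → ℝ} {t : ℝ}
    (hx : ∀ i ∈ Icc 1 N, HasDerivAt (x i) (v i) t) :
    HasDerivAt (fun s => energy N a (fun i => x i s))
      (4 * ∑ i ∈ Icc 1 N, ∑ j ∈ (Icc 1 N).filter (fun j => i < j),
        a i * a j * Real.exp (-(x i t - x j t)) * (v j - v i)) t := by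
  have hpairs : HasDerivAt (fun s => ∑ i ∈ Icc 1 N, ∑ j ∈ (Icc 1 N).filter (fun j => i < j),
      a i * a j * Real.exp (-(x i s - x j s)))
      (∑ i ∈ Icc 1 N, ∑ j ∈ (Icc 1 N).filter (fun j => i < j),
        a i * a j * Real.exp (-(x i t - x j t)) * (v j - v i)) t := by
    refine HasDerivAt.fun_sum fun i hi => HasDerivAt.fun_sum fun j hj => ?_
    refine ((((hx i hi).fun_sub (hx j (mem_filter.mp hj).1)).fun_neg.exp).const_mul
      (a i * a j)).congr_deriv ?_
    ring
  exact (hpairs.const_mul 4).const_add _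

end Peakons

end MCHPeakon

theorem mCH_ordered_peakon_E1_increasing_general
    (N : ℕ) (hN : 2 ≤ N) (a : ℕ → ℝ) (x : ℕ → ℝ → ℝ) (J : Set ℝ)
    (hJconn : J.OrdConnected)
    (hapos : ∀ i ∈ Finset.Icc 1 N, 0 < a i)
    (hamono : ∀ i ∈ Finset.Icc 1 N, ∀ j ∈ Finset.Icc 1 N, i < j → a i < a j)
    (horder : ∀ t ∈ J, ∀ i ∈ Finset.Icc 1 N, ∀ j ∈ Finset.Icc 1 N, i < j →
      x j t < x i t)
    (heom : ∀ t ∈ J, ∀ i ∈ Finset.Icc 1 N,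
      HasDerivAt (x i)
        ((2/3) * a i ^ 2
          + 2 * a i * ∑ j ∈ (Finset.Icc 1 N).erase i,
              a j * Real.exp (-|x i t - x j t|)
          + 4 * ∑ j ∈ (Finset.Icc 1 N).filter (fun j => j < i),
              ∑ k ∈ (Finset.Icc 1 N).filter (fun k => i < k),
                a j * a k * Real.exp (-(x j t - x k t))) t) :
    (∀ t ∈ J, ∃ d : ℝ, 0 < d ∧
      HasDerivAt (fun s =>
          2 * ∑ i ∈ Finset.Icc 1 N, a i ^ 2
            + 4 * ∑ i ∈ Finset.Icc 1 N, ∑ j ∈ (Finset.Icc 1 N).filter (fun j => i < j),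
                a i * a j * Real.exp (-(x i s - x j s))) d t)
    ∧ StrictMonoOn (fun s =>
          2 * ∑ i ∈ Finset.Icc 1 N, a i ^ 2
            + 4 * ∑ i ∈ Finset.Icc 1 N, ∑ j ∈ (Finset.Icc 1 N).filter (fun j => i < j),
                a i * a j * Real.exp (-(x i s - x j s))) J := by
  have hderiv : ∀ t ∈ J, ∃ d : ℝ, 0 < d ∧
      HasDerivAt (fun s => MCHPeakon.energy N a (fun i => x i s)) d t := by
    intro t ht
    refine ⟨_, ?_, MCHPeakon.hasDerivAt_energy N a (v := MCHPeakon.velocity N a fun i => x i t)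
      (heom t ht)⟩
    rw [MCHPeakon.sum_pairs_mul_velocity_sub N a (horder t ht)]
    refine mul_pos (by norm_num) (sum_Icc_filter_lt_pos hN fun i hi j hj hij => ?_)
    have := hapos i hi
    have := hapos j hj
    have := sub_pos.mpr (pow_lt_pow_left₀ (hamono i hi j hj hij) (hapos i hi).le two_ne_zero)
    positivity
  refine ⟨hderiv, strictMonoOn_of_deriv_pos hJconn.convex ?_ fun t ht => ?_⟩
  · exact fun t ht => (hderiv t ht).choose_spec.2.continuousAt.continuousWithinAt
  · obtain ⟨d, hd, hasDeriv⟩ := hderiv t (interior_subset ht)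
    exact hd.trans_eq hasDeriv.deriv.symm

/-- For the ordered mCH `N`-peakon system with amplitudes
`0 < a₁ < a₂ < ⋯ < a_N`, the reduced first Hamiltonian
`E₁(t) = 2 ∑ᵢ aᵢ² + 4 ∑_{i<j} aᵢ aⱼ e^{-(xᵢ(t)-xⱼ(t))}` has strictly positive
derivative at each `t ∈ J`; in particular it is strictly increasing on `J`
(hence not a conserved quantity of the system). -/
theorem mCH_ordered_peakon_E1_increasing
    (N : ℕ) (hN : 2 ≤ N) (a : ℕ → ℝ) (x : ℕ → ℝ → ℝ) (J : Set ℝ)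
    (hJopen : IsOpen J) (hJconn : J.OrdConnected)
    (hapos : ∀ i ∈ Finset.Icc 1 N, 0 < a i)
    (hamono : ∀ i ∈ Finset.Icc 1 N, ∀ j ∈ Finset.Icc 1 N, i < j → a i < a j)
    (horder : ∀ t ∈ J, ∀ i ∈ Finset.Icc 1 N, ∀ j ∈ Finset.Icc 1 N, i < j →
      x j t < x i t)
    (heom : ∀ t ∈ J, ∀ i ∈ Finset.Icc 1 N,
      HasDerivAt (x i)
        ((2/3) * a i ^ 2
          + 2 * a i * ∑ j ∈ (Finset.Icc 1 N).erase i,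
              a j * Real.exp (-|x i t - x j t|)
          + 4 * ∑ j ∈ (Finset.Icc 1 N).filter (fun j => j < i),
              ∑ k ∈ (Finset.Icc 1 N).filter (fun k => i < k),
                a j * a k * Real.exp (-(x j t - x k t))) t) :
    (∀ t ∈ J, ∃ d : ℝ, 0 < d ∧
      HasDerivAt (fun s =>
          2 * ∑ i ∈ Finset.Icc 1 N, a i ^ 2
            + 4 * ∑ i ∈ Finset.Icc 1 N, ∑ j ∈ (Finset.Icc 1 N).filter (fun j => i < j),
                a i * a j * Real.exp (-(x i s - x j s))) d t)
    ∧ StrictMonoOn (fun s =>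
          2 * ∑ i ∈ Finset.Icc 1 N, a i ^ 2
            + 4 * ∑ i ∈ Finset.Icc 1 N, ∑ j ∈ (Finset.Icc 1 N).filter (fun j => i < j),
                a i * a j * Real.exp (-(x i s - x j s))) J :=
  mCH_ordered_peakon_E1_increasing_general N hN a x J hJconn hapos hamono horder heom
end

section
/- Let $a_1, a_2$ be real constants and let $x_1, x_2 : J \to \mathbb{R}$ be differentiable functions on an open interval $J$ satisfying the mCH $2$-peakon system, with $x_1(t) \neq x_2(t)$ for all $t \in J$. Then the function $I(t) = a_1^2 x_2(t) - a_2^2 x_1(t) + 3 a_1 a_2 \, \mathrm{sgn}(x_1(t)-x_2(t)) \, e^{-|x_1(t)-x_2(t)|}$ is constant on $J$. -/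
/-!
Off the diagonal, `φ(z) = sgn z · e^{-|z|}` is differentiable with `φ' = -e^{-|z|}`. With
`E = e^{-|x₁ - x₂|}` the equations of motion give `a₁² ẋ₂ - a₂² ẋ₁ = 2 a₁ a₂ (a₁² - a₂²) E` and
`ẋ₁ - ẋ₂ = (2/3)(a₁² - a₂²)`, so `d/dt [3 a₁ a₂ φ(x₁ - x₂)] = -2 a₁ a₂ (a₁² - a₂²) E` cancels it
and `İ = 0` on the interval `J`.
-/

open Real

theorem hasDerivAt_sign_mul_exp_neg_abs {z : ℝ} (hz : z ≠ 0) :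
    HasDerivAt (fun y => Real.sign y * exp (-|y|)) (-exp (-|z|)) z := by
  rcases hz.lt_or_gt with hneg | hpos
  · have hloc : (fun y => -exp y) =ᶠ[nhds z] fun y => Real.sign y * exp (-|y|) := by
      filter_upwards [Iio_mem_nhds hneg] with y hy
      rw [Real.sign_of_neg hy, abs_of_neg hy, neg_neg, neg_one_mul]
    simpa only [abs_of_neg hneg, neg_neg] using
      (hasDerivAt_exp z).neg.congr_of_eventuallyEq hloc.symm
  · have hloc : (fun y => exp (-y)) =ᶠ[nhds z] fun y => Real.sign y * exp (-|y|) := by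
      filter_upwards [Ioi_mem_nhds hpos] with y hy
      rw [Real.sign_of_pos hy, abs_of_pos hy, one_mul]
    simpa only [abs_of_pos hpos, mul_neg_one] using
      ((hasDerivAt_neg z).exp).congr_of_eventuallyEq hloc.symm

theorem Set.OrdConnected.eq_of_hasDerivAt_eq_zero {E : Type*} [NormedAddCommGroup E]
    [NormedSpace ℝ E] {f : ℝ → E} {s : Set ℝ} (hs : s.OrdConnected)
    (hf : ∀ t ∈ s, HasDerivAt f 0 t) {x y : ℝ} (hx : x ∈ s) (hy : y ∈ s) : f x = f y := by
  have hle := (convex_iff_ordConnected.mpr hs).norm_image_sub_le_of_norm_hasDerivWithin_le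
    (fun t ht => (hf t ht).hasDerivWithinAt) (fun _ _ => norm_zero.le) hy hx
  rw [zero_mul, norm_le_zero_iff, sub_eq_zero] at hle
  exact hle

theorem mCH_two_peakon_I_constant_general
    (a₁ a₂ : ℝ) (x₁ x₂ : ℝ → ℝ) (J : Set ℝ)
    (hJconn : J.OrdConnected)
    (hne : ∀ t ∈ J, x₁ t ≠ x₂ t)
    (heom₁ : ∀ t ∈ J, HasDerivAt x₁ ((2/3) * a₁ ^ 2
      + 2 * a₁ * a₂ * Real.exp (-|x₁ t - x₂ t|)) t)
    (heom₂ : ∀ t ∈ J, HasDerivAt x₂ ((2/3) * a₂ ^ 2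
      + 2 * a₁ * a₂ * Real.exp (-|x₁ t - x₂ t|)) t) :
    ∀ t ∈ J, ∀ t' ∈ J,
      a₁ ^ 2 * x₂ t - a₂ ^ 2 * x₁ t
          + 3 * a₁ * a₂ * Real.sign (x₁ t - x₂ t) * Real.exp (-|x₁ t - x₂ t|)
        = a₁ ^ 2 * x₂ t' - a₂ ^ 2 * x₁ t'
          + 3 * a₁ * a₂ * Real.sign (x₁ t' - x₂ t') * Real.exp (-|x₁ t' - x₂ t'|) := by
  intro t ht t' ht'
  let I : ℝ → ℝ := fun s => a₁ ^ 2 * x₂ s - a₂ ^ 2 * x₁ s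
    + 3 * a₁ * a₂ * (Real.sign (x₁ s - x₂ s) * exp (-|x₁ s - x₂ s|))
  have hI : ∀ s ∈ J, HasDerivAt I 0 s := fun s hs => by
    have hφ := (hasDerivAt_sign_mul_exp_neg_abs (sub_ne_zero.mpr (hne s hs))).comp s
      ((heom₁ s hs).sub (heom₂ s hs))
    exact ((((heom₂ s hs).const_mul (a₁ ^ 2)).sub ((heom₁ s hs).const_mul (a₂ ^ 2))).add
      (hφ.const_mul (3 * a₁ * a₂))).congr_deriv (by ring)
  simpa only [I, mul_assoc] using hJconn.eq_of_hasDerivAt_eq_zero hI ht ht'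

/-- For the mCH 2-peakon system with `x₁(t) ≠ x₂(t)` on `J`,
the quantity `I(t) = a₁² x₂(t) - a₂² x₁(t) + 3 a₁ a₂ sgn(x₁(t)-x₂(t)) e^{-|x₁(t)-x₂(t)|}`
is constant on `J`. -/
theorem mCH_two_peakon_I_constant
    (a₁ a₂ : ℝ) (x₁ x₂ : ℝ → ℝ) (J : Set ℝ)
    (hJopen : IsOpen J) (hJconn : J.OrdConnected)
    (hne : ∀ t ∈ J, x₁ t ≠ x₂ t)
    (heom₁ : ∀ t ∈ J, HasDerivAt x₁ ((2/3) * a₁ ^ 2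
      + 2 * a₁ * a₂ * Real.exp (-|x₁ t - x₂ t|)) t)
    (heom₂ : ∀ t ∈ J, HasDerivAt x₂ ((2/3) * a₂ ^ 2
      + 2 * a₁ * a₂ * Real.exp (-|x₁ t - x₂ t|)) t) :
    ∀ t ∈ J, ∀ t' ∈ J,
      a₁ ^ 2 * x₂ t - a₂ ^ 2 * x₁ t
          + 3 * a₁ * a₂ * Real.sign (x₁ t - x₂ t) * Real.exp (-|x₁ t - x₂ t|)
        = a₁ ^ 2 * x₂ t' - a₂ ^ 2 * x₁ t'
          + 3 * a₁ * a₂ * Real.sign (x₁ t' - x₂ t') * Real.exp (-|x₁ t' - x₂ t'|) :=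
  mCH_two_peakon_I_constant_general a₁ a₂ x₁ x₂ J hJconn hne heom₁ heom₂
end
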